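/- Let f: M → M be a homeomorphism of a compact metric space, let x be a positively shadowable chain-recurrent point, and suppose the chain-recurrence class H(x) is locally maximal (i.e., there is an open neighborhood U of H(x) such that H(x) is the maximal invariant set contained in U). Then H(x) has the intrinsic shadowing property: for every ε > 0 there is δ > 0 such that every two-sided δ-pseudo-orbit contained in H(x) is ε-shadowed by a point of H(x). -/

import Mathlib

open Function Metric

/-- A one-sided `δ`-pseudo-orbit for `f`. -/
def IsPO {M : Type*} [MetricSpace M] (f : M → M) (δ : ℝ) (y : ℕ → M) : Prop :=
  ∀ i, dist (f (y i)) (y (i + 1)) ≤ δ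

/-- A one-sided sequence is `ε`-shadowed by a true orbit. -/
def IsShadowed {M : Type*} [MetricSpace M] (f : M → M) (ε : ℝ) (y : ℕ → M) : Prop :=
  ∃ z : M, ∀ i, dist (f^[i] z) (y i) ≤ ε

/-- A point is positively shadowable: every one-sided `δ`-pseudo-orbit starting
at `x` is `ε`-shadowed, for suitable `δ = δ(ε)`. -/
def PosShadowable {M : Type*} [MetricSpace M] (f : M → M) (x : M) : Prop :=
  ∀ ε > 0, ∃ δ > 0, ∀ y : ℕ → M, y 0 = x → IsPO f δ y → IsShadowed f ε y

/-- There is a finite `δ`-pseudo-orbit (of positive length) from `a` to `b`. -/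
def ChainFrom {M : Type*} [MetricSpace M] (f : M → M) (δ : ℝ) (a b : M) : Prop :=
  ∃ (n : ℕ) (c : ℕ → M), 0 < n ∧ c 0 = a ∧ c n = b ∧ ∀ i < n, dist (f (c i)) (c (i + 1)) ≤ δ

/-- `a → b`: for every `δ > 0` there is a finite `δ`-pseudo-orbit from `a` to `b`. -/
def ChainLe {M : Type*} [MetricSpace M] (f : M → M) (a b : M) : Prop :=
  ∀ δ > 0, ChainFrom f δ a b

/-- A chain-recurrent point. -/
def ChainRec {M : Type*} [MetricSpace M] (f : M → M) (x : M) : Prop := ChainLe f x x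

/-- The chain-recurrence class `H(x)` of `x`. -/
def ChainClass {M : Type*} [MetricSpace M] (f : M → M) (x : M) : Set M :=
  {y | ChainLe f x y ∧ ChainLe f y x}

/-- The `n`-th iterate (`n : ℤ`) of a homeomorphism. -/
def zIter {M : Type*} [TopologicalSpace M] (f : M ≃ₜ M) (n : ℤ) : M → M :=
  fun p => (f.toEquiv ^ n) p

/-- A two-sided `δ`-pseudo-orbit for `f`. -/
def IsPOZ {M : Type*} [MetricSpace M] (f : M → M) (δ : ℝ) (y : ℤ → M) : Prop :=
  ∀ i : ℤ, dist (f (y i)) (y (i + 1)) ≤ δ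


lemma zIter_add {M : Type*} [TopologicalSpace M] (f : M ≃ₜ M) (a b : ℤ) (p : M) :
    zIter f a (zIter f b p) = zIter f (a + b) p := by
  simp [zIter, zpow_add, Equiv.Perm.mul_apply]

lemma zIter_zero {M : Type*} [TopologicalSpace M] (f : M ≃ₜ M) (p : M) : zIter f 0 p = p := by
  simp [zIter]

lemma zIter_one {M : Type*} [TopologicalSpace M] (f : M ≃ₜ M) (p : M) : zIter f 1 p = f p := by
  simp [zIter]

lemma zIter_succ {M : Type*} [TopologicalSpace M] (f : M ≃ₜ M) (i : ℤ) (p : M) :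
    zIter f (i + 1) p = f (zIter f i p) := by
  rw [add_comm, ← zIter_add f 1 i, zIter_one]

lemma zIter_neg_one {M : Type*} [TopologicalSpace M] (f : M ≃ₜ M) (p : M) :
    zIter f (-1) p = f.symm p := by
  simp [zIter, zpow_neg, Equiv.Perm.inv_def]

lemma zIter_pred {M : Type*} [TopologicalSpace M] (f : M ≃ₜ M) (i : ℤ) (p : M) :
    zIter f (i - 1) p = f.symm (zIter f i p) := by
  rw [sub_eq_neg_add, ← zIter_add f (-1) i, zIter_neg_one]

lemma zIter_natCast {M : Type*} [TopologicalSpace M] (f : M ≃ₜ M) (n : ℕ) (p : M) :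
    zIter f (n : ℤ) p = (⇑f)^[n] p := by
  induction n with
  | zero => simp [zIter_zero]
  | succ n ih =>
      rw [Nat.cast_succ, zIter_succ, ih, Function.iterate_succ_apply']

lemma continuous_zIter {M : Type*} [TopologicalSpace M] (f : M ≃ₜ M) (i : ℤ) :
    Continuous (zIter f i) := by
  induction i using Int.induction_on with
  | zero => simpa [funext (zIter_zero f)] using continuous_id'
  | succ n ih =>
      have h : zIter f (n + 1) = ⇑f ∘ zIter f n := funext fun p => zIter_succ f n p
      rw [h]; exact f.continuous.comp ih
  | pred n ih =>
      have h : zIter f (-n - 1) = ⇑f.symm ∘ zIter f (-n) := funext fun p => zIter_pred f (-n) p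
      rw [h]; exact f.symm.continuous.comp ih

lemma isClosed_chainClass {M : Type*} [MetricSpace M] (f : M → M) (hf : Continuous f) (x : M) :
    IsClosed (ChainClass f x) := by
  refine isClosed_of_closure_subset fun p hp => ?_
  rw [Metric.mem_closure_iff] at hp
  constructor
  · intro δ hδ
    obtain ⟨a, ha, hda⟩ := hp (δ / 2) (by linarith)
    obtain ⟨n, c, hn, hc0, hcn, hstep⟩ := ha.1 (δ / 2) (by linarith)
    refine ⟨n, fun i => if i = n then p else c i, hn, ?_, by simp, ?_⟩
    · simp [hn.ne, hc0]
    · intro i hi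
      simp only [hi.ne]
      by_cases h : i + 1 = n
      · simp only [if_pos h]
        calc dist (f (c i)) p ≤ dist (f (c i)) (c (i + 1)) + dist (c (i + 1)) p := dist_triangle _ _ _
          _ ≤ δ / 2 + δ / 2 := by
              refine add_le_add (hstep i hi) ?_
              rw [h, hcn, dist_comm]
              exact hda.le
          _ = δ := by ring
      · simpa [if_neg h] using (hstep i hi).trans (by linarith)
  · intro δ hδ
    obtain ⟨η, hη, hcont⟩ := Metric.continuousAt_iff.mp (hf.continuousAt (x := p)) (δ / 2) (by linarith)
    obtain ⟨a, ha, hda⟩ := hp η hη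
    obtain ⟨n, c, hn, hc0, hcn, hstep⟩ := ha.2 (δ / 2) (by linarith)
    refine ⟨n, fun i => if i = 0 then p else c i, hn, by simp, ?_, ?_⟩
    · simp [hn.ne', hcn]
    · intro i hi
      have h1 : i + 1 ≠ 0 := Nat.succ_ne_zero i
      by_cases h : i = 0
      · subst h
        simp only [if_pos rfl, if_neg h1]
        have h2 : dist (f a) (f p) < δ / 2 := hcont (by rwa [dist_comm])
        calc dist (f p) (c 1) ≤ dist (f p) (f a) + dist (f a) (c 1) := dist_triangle _ _ _
          _ ≤ δ / 2 + δ / 2 := add_le_add (by rw [dist_comm]; exact h2.le)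
              (by rw [← hc0]; exact hstep 0 hi)
          _ = δ := by ring
      · simpa [if_neg h, if_neg h1] using (hstep i hi).trans (by linarith)

/-- if moreover `H(x)` is locally maximal, then `H(x)` has the
intrinsic shadowing property: shadowing points can be found inside `H(x)`. -/
theorem chainClass_intrinsic_shadowing {M : Type*} [MetricSpace M] [CompactSpace M]
    (f : M ≃ₜ M) (x : M) (h1 : PosShadowable (⇑f) x) (h2 : ChainRec (⇑f) x)
    (hmax : ∃ U : Set M, IsOpen U ∧ ChainClass (⇑f) x ⊆ U ∧
      ∀ z : M, (∀ n : ℤ, zIter f n z ∈ U) → z ∈ ChainClass (⇑f) x) :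
    ∀ ε > 0, ∃ δ > 0, ∀ y : ℤ → M, (∀ i : ℤ, y i ∈ ChainClass (⇑f) x) →
      IsPOZ (⇑f) δ y →
        ∃ z ∈ ChainClass (⇑f) x, ∀ i : ℤ, dist (zIter f i z) (y i) ≤ ε := by
  obtain ⟨U, hUopen, hUsub, hUmax⟩ := hmax
  intro ε hε
  have hcl : IsClosed (ChainClass (⇑f) x) := isClosed_chainClass (⇑f) f.continuous x
  have hcpt : IsCompact (ChainClass (⇑f) x) := hcl.isCompact
  obtain ⟨r, hr, hrsub⟩ := hcpt.exists_thickening_subset_open hUopen hUsub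
  set ε₀ := min ε (r / 2) with hε₀def
  have hε₀ : 0 < ε₀ := lt_min hε (by linarith)
  obtain ⟨δ, hδ, hshad⟩ := h1 ε₀ hε₀
  refine ⟨δ, hδ, fun y hy hpoz => ?_⟩
  have key : ∀ n : ℕ, ∃ q : M, ∀ i : ℤ, -(n : ℤ) ≤ i → dist (zIter f i q) (y i) ≤ ε₀ := by
    intro n
    obtain ⟨m, c, hm, hc0, hcm, hcstep⟩ := (hy (-(n : ℤ))).1 δ hδ
    set w : ℕ → M := fun j => if j < m then c j else y ((j : ℤ) - m - n) with hw
    have hwm : ∀ j : ℕ, m ≤ j → w j = y ((j : ℤ) - m - n) := fun j hj => if_neg (not_lt.mpr hj)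
    have hw0 : w 0 = x := by simp [hw, hm, hc0]
    have hwPO : IsPO (⇑f) δ w := by
      intro j
      rcases lt_or_ge (j + 1) m with h | h
      · have hj : j < m := Nat.lt_of_succ_lt h
        simp only [hw, if_pos hj, if_pos h]
        exact hcstep j hj
      · rcases lt_or_ge j m with hj | hj
        · have hjm : j + 1 = m := le_antisymm hj h
          rw [hwm (j + 1) h]
          simp only [hw, if_pos hj]
          have he : ((j + 1 : ℕ) : ℤ) - m - n = -(n : ℤ) := by push_cast; omega
          rw [he, ← hcm, ← hjm]
          exact hcstep j hj
        · rw [hwm j hj, hwm (j + 1) (hj.trans (Nat.le_succ j))]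
          have he : ((j + 1 : ℕ) : ℤ) - m - n = ((j : ℤ) - m - n) + 1 := by push_cast; ring
          rw [he]
          exact hpoz ((j : ℤ) - m - n)
    obtain ⟨z, hz⟩ := hshad w hw0 hwPO
    refine ⟨(⇑f)^[m + n] z, fun i hi => ?_⟩
    have hnn : (0 : ℤ) ≤ i + m + n := by
      have : (0 : ℤ) ≤ (m : ℤ) := Int.natCast_nonneg m
      linarith
    set j : ℕ := (i + m + n).toNat with hjdef
    have hj : (j : ℤ) = i + m + n := Int.toNat_of_nonneg hnn
    have heq1 : zIter f i ((⇑f)^[m + n] z) = (⇑f)^[j] z := by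
      rw [← zIter_natCast f (m + n) z, zIter_add, ← zIter_natCast f j z]
      congr 1
      rw [hj]; push_cast; ring
    have hmj : m ≤ j := by
      have : (m : ℤ) ≤ (j : ℤ) := by rw [hj]; linarith
      exact_mod_cast this
    have heq2 : w j = y i := by
      rw [hwm j hmj]
      congr 1
      rw [hj]; ring
    rw [heq1, ← heq2]
    exact hz j
  choose q hq using key
  obtain ⟨p, -, φ, hφ, hlim⟩ := isCompact_univ.tendsto_subseq (fun n => Set.mem_univ (q n))
  have hp : ∀ i : ℤ, dist (zIter f i p) (y i) ≤ ε₀ := by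
    intro i
    have hc : Filter.Tendsto (fun k => dist (zIter f i (q (φ k))) (y i)) Filter.atTop
        (nhds (dist (zIter f i p) (y i))) :=
      (Filter.Tendsto.comp (continuous_zIter f i).continuousAt.tendsto hlim).dist
        tendsto_const_nhds
    refine le_of_tendsto hc ?_
    filter_upwards [Filter.eventually_atTop.mpr ⟨i.natAbs, fun k hk => hk⟩] with k hk
    refine hq (φ k) i ?_
    have h1 : i.natAbs ≤ φ k := hk.trans hφ.le_apply
    omega
  have hpH : p ∈ ChainClass (⇑f) x := by
    refine hUmax p fun n => hrsub ?_
    rw [mem_thickening_iff]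
    refine ⟨y n, hy n, lt_of_le_of_lt ((hp n).trans (min_le_right _ _)) (by linarith)⟩
  exact ⟨p, hpH, fun i => (hp i).trans (min_le_left _ _)⟩
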